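/- Let N ∈ ℕ with N ≥ 1 and d ∈ ℝ, and let a : ℕ → ℝ be the odd-parity QES coefficient sequence for parameters (N, d). Then for every k ≥ 1, a(k+1) = ((−1)^k / ((k+1)!·k!)) · det Q^{(N,k)}(d), where Q^{(N,k)}(d) is the k×k tridiagonal matrix defined in the context. -/

import Mathlib

/-!
Expanding `det Q^(N,k+2)` along its last row, and the resulting minor along its last column,
gives the three-term recurrence
`det Q_{k+2} = 2(k+2) d · det Q_{k+1} - 2(N-k-1)(k+1)(k+2) · det Q_k`.
After the normalisation `(-1)^k / ((k+1)! k!)` this becomes exactly the coefficient recurrence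
for `k ↦ a (k+1)`. Both sequences start with `1, -d`, and the leading coefficient `(n+2)(n+3)`
never vanishes, so they coincide.
-/

/-- The k×k tridiagonal matrix `Q^(N,k)(d)` of the odd-parity QES construction:
`Q i i = 2·(i+1)·d`, `Q i (i+1) = (i+1)·(i+2)`, `Q i (i-1) = 2·(N − i)`,
all other entries `0`. -/
def Qmat (N : ℕ) (d : ℝ) (k : ℕ) : Matrix (Fin k) (Fin k) ℝ :=
  Matrix.of fun i j =>
    if (j : ℕ) = (i : ℕ) then 2 * ((i : ℝ) + 1) * d
    else if (j : ℕ) = (i : ℕ) + 1 then ((i : ℝ) + 1) * ((i : ℝ) + 2)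
    else if (j : ℕ) + 1 = (i : ℕ) then 2 * ((N : ℝ) - (i : ℝ))
    else 0

theorem eq_of_three_term_recurrence {R : Type*} [CommRing R] [IsDomain R] {p q r u v : ℕ → R}
    (hr : ∀ n, r n ≠ 0) (hu : ∀ n, p n * u n + q n * u (n + 1) + r n * u (n + 2) = 0)
    (hv : ∀ n, p n * v n + q n * v (n + 1) + r n * v (n + 2) = 0)
    (h0 : u 0 = v 0) (h1 : u 1 = v 1) : u = v := by
  suffices h : ∀ n, u n = v n ∧ u (n + 1) = v (n + 1) from funext fun n => (h n).1
  intro n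
  induction n with
  | zero => exact ⟨h0, h1⟩
  | succ n ih =>
    refine ⟨ih.2, mul_left_cancel₀ (hr n) ?_⟩
    linear_combination hu n - hv n - p n * ih.1 - q n * ih.2

namespace Matrix

variable {R : Type*} [CommRing R]

theorem det_succ_of_row_last_eq_zero {n : ℕ} (A : Matrix (Fin (n + 1)) (Fin (n + 1)) R)
    (h : ∀ j : Fin n, A (Fin.last n) j.castSucc = 0) :
    A.det = A (Fin.last n) (Fin.last n) * (A.submatrix Fin.castSucc Fin.castSucc).det := by
  rw [det_succ_row A (Fin.last n), Fin.sum_univ_castSucc]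
  simp [h, Fin.succAbove_last, ← two_mul, pow_mul]

theorem det_succ_of_col_last_eq_zero {n : ℕ} (A : Matrix (Fin (n + 1)) (Fin (n + 1)) R)
    (h : ∀ i : Fin n, A i.castSucc (Fin.last n) = 0) :
    A.det = A (Fin.last n) (Fin.last n) * (A.submatrix Fin.castSucc Fin.castSucc).det := by
  rw [← det_transpose, det_succ_of_row_last_eq_zero Aᵀ h, ← transpose_submatrix, det_transpose,
    transpose_apply]

theorem det_succ_succ_of_row_last_eq_zero {n : ℕ} (A : Matrix (Fin (n + 2)) (Fin (n + 2)) R)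
    (h : ∀ j : Fin n, A (Fin.last (n + 1)) j.castSucc.castSucc = 0) :
    A.det = A (Fin.last (n + 1)) (Fin.last (n + 1)) *
        (A.submatrix Fin.castSucc Fin.castSucc).det
      - A (Fin.last (n + 1)) (Fin.last n).castSucc *
        (A.submatrix Fin.castSucc (Fin.last n).castSucc.succAbove).det := by
  rw [det_succ_row A (Fin.last (n + 1)), Fin.sum_univ_castSucc, Fin.sum_univ_castSucc]
  simp [h, Fin.succAbove_last, ← two_mul, pow_mul, sub_eq_add_neg, add_comm]

end Matrix

section Qmat

variable (N : ℕ) (d : ℝ)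

theorem Qmat_submatrix {k m : ℕ} (f g : Fin k → Fin m)
    (hf : ∀ i, (f i : ℕ) = i) (hg : ∀ j, (g j : ℕ) = j) :
    (Qmat N d m).submatrix f g = Qmat N d k := by
  ext i j
  simp [Qmat, hf, hg]

theorem Qmat_apply_self {k : ℕ} (i : Fin k) : Qmat N d k i i = 2 * ((i : ℝ) + 1) * d := by
  simp [Qmat]

theorem Qmat_apply_of_eq_succ {k : ℕ} {i j : Fin k} (h : (j : ℕ) = i + 1) :
    Qmat N d k i j = ((i : ℝ) + 1) * ((i : ℝ) + 2) := by
  simp only [Qmat, Matrix.of_apply]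
  rw [if_neg (by omega), if_pos h]

theorem Qmat_apply_of_succ_eq {k : ℕ} {i j : Fin k} (h : (j : ℕ) + 1 = i) :
    Qmat N d k i j = 2 * ((N : ℝ) - i) := by
  simp only [Qmat, Matrix.of_apply]
  rw [if_neg (by omega), if_neg (by omega), if_pos h]

theorem Qmat_apply_eq_zero {k : ℕ} {i j : Fin k} (h : (j : ℕ) + 1 < i ∨ (i : ℕ) + 1 < j) :
    Qmat N d k i j = 0 := by
  simp only [Qmat, Matrix.of_apply]
  rw [if_neg (by omega), if_neg (by omega), if_neg (by omega)]

theorem det_Qmat_one : (Qmat N d 1).det = 2 * d := by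
  simp [Qmat]

theorem det_Qmat_add_two (k : ℕ) :
    (Qmat N d (k + 2)).det = 2 * (k + 2) * d * (Qmat N d (k + 1)).det
      - 2 * (N - (k + 1)) * ((k + 1) * (k + 2)) * (Qmat N d k).det := by
  have hsucc : (Fin.last k).castSucc.succAbove (Fin.last k) = Fin.last (k + 1) := by
    simp [Fin.succAbove]
  have minor : ((Qmat N d (k + 2)).submatrix Fin.castSucc (Fin.last k).castSucc.succAbove).det
      = (k + 1) * (k + 2) * (Qmat N d k).det := by
    rw [Matrix.det_succ_of_col_last_eq_zero _
        (fun i => by simpa [hsucc] using Qmat_apply_eq_zero N d (by simp)),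
      Matrix.submatrix_submatrix,
      Qmat_submatrix N d (Fin.castSucc ∘ Fin.castSucc)
        ((Fin.last k).castSucc.succAbove ∘ Fin.castSucc) (fun _ => rfl) (by simp [Fin.succAbove]),
      Matrix.submatrix_apply, hsucc, Qmat_apply_of_eq_succ N d (by simp)]
    simp
  rw [Matrix.det_succ_succ_of_row_last_eq_zero _
      (fun j => Qmat_apply_eq_zero N d (by simp)), minor,
    Qmat_submatrix N d Fin.castSucc Fin.castSucc (fun _ => rfl) (fun _ => rfl),
    Qmat_apply_self, Qmat_apply_of_succ_eq N d (by simp)]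
  simp only [Fin.val_last, Nat.cast_add, Nat.cast_one]
  ring

noncomputable def normalizedDetQmat (k : ℕ) : ℝ :=
  (-1) ^ k / ((k + 1).factorial * k.factorial) * (Qmat N d k).det

theorem normalizedDetQmat_recurrence (n : ℕ) :
    (2 * N - 2 * (n + 1)) * normalizedDetQmat N d n
      + 2 * d * (n + 2) * normalizedDetQmat N d (n + 1)
      + (n + 2) * (n + 3) * normalizedDetQmat N d (n + 2) = 0 := by
  simp only [normalizedDetQmat, det_Qmat_add_two, Nat.factorial_succ, pow_succ]
  push_cast
  field_simp
  ring

end Qmat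

theorem odd_parity_QES_closed_form_general (N : ℕ) (d : ℝ) (a : ℕ → ℝ)
    (h0 : a 0 = 0) (h1 : a 1 = 1)
    (hrec : ∀ n : ℕ, (2 * (N : ℝ) - 2 * n) * a n + 2 * d * (n + 1) * a (n + 1)
      + (n + 1) * (n + 2) * a (n + 2) = 0) :
    ∀ k : ℕ, 1 ≤ k →
      a (k + 1) = ((-1 : ℝ) ^ k / ((Nat.factorial (k + 1) : ℝ) * (Nat.factorial k : ℝ)))
        * (Qmat N d k).det := by
  have ha2 : a 2 = -d := by
    have h := hrec 0
    norm_num [h0, h1] at h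
    linarith
  have shifted : (fun n => a (n + 1)) = normalizedDetQmat N d :=
    eq_of_three_term_recurrence (fun n => by positivity)
      (fun n => by
        have h := hrec (n + 1)
        push_cast at h
        linear_combination h)
      (normalizedDetQmat_recurrence N d)
      (by simp [h1, normalizedDetQmat])
      (by rw [ha2, normalizedDetQmat, det_Qmat_one]; norm_num; ring)
  exact fun k _ => congrFun shifted k

/-- Closed-form determinantal solution of the odd-parity QES recurrences. -/
theorem odd_parity_QES_closed_form (N : ℕ) (hN : 1 ≤ N) (d : ℝ) (a : ℕ → ℝ)
    (h0 : a 0 = 0) (h1 : a 1 = 1)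
    (hrec : ∀ n : ℕ, (2 * (N : ℝ) - 2 * n) * a n + 2 * d * (n + 1) * a (n + 1)
      + (n + 1) * (n + 2) * a (n + 2) = 0) :
    ∀ k : ℕ, 1 ≤ k →
      a (k + 1) = ((-1 : ℝ) ^ k / ((Nat.factorial (k + 1) : ℝ) * (Nat.factorial k : ℝ)))
        * (Qmat N d k).det :=
  odd_parity_QES_closed_form_general N d a h0 h1 hrec
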